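/- Let λ ≠ 1 and let W₀ := {H ∈ W : H_{ijk} = 0 for all i,j,k ∈ {1,2,3}} be the semi-teleparallel constraint subspace. Then the restriction of q to W₀ has a critical point if and only if Σ_{j=1}^{3} K_{ijj} = 0 for each i ∈ {1,2,3}; and in that case H ∈ W₀ is a critical point of q|_{W₀} if and only if H_{0ij} = K_{0ij} and H_{ij0} = K_{ij0} for all i,j ∈ {1,2,3}, the components H_{0i0} being arbitrary. -/

import Mathlib

open Finset

noncomputable section

/- Index set {0,1,2,3}. -/
abbrev Idx := Fin 4

/-- The Minkowski metric η_{ab} = diag(−1,1,1,1) (which equals its inverse η^{ab}). -/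
def ηm (a b : Idx) : ℝ := if a = b then (if a = (0 : Idx) then -1 else 1) else 0

/- Rank-3 tensors H_{abc} (all indices lowered). -/
abbrev T3 := Idx → Idx → Idx → ℝ

/-- Raising all three indices: H^{abc} = η^{aa'} η^{bb'} η^{cc'} H_{a'b'c'}. -/
def up3 (H : T3) (a b c : Idx) : ℝ :=
  ∑ a', ∑ b', ∑ c', ηm a a' * ηm b b' * ηm c c' * H a' b' c'

/-- Total antisymmetrization H_{[abc]} with weight 1/3!. -/
def asym (H : T3) (a b c : Idx) : ℝ :=
  (H a b c - H a c b + H b c a - H b a c + H c a b - H c b a) / 6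

/-- The contraction H^a{}_{ca} (free index c): η^{aa'} H_{a'ca}. -/
def tr1 (H : T3) (c : Idx) : ℝ := ∑ a, ∑ a', ηm a a' * H a' c a

/-- The contraction H^{cb}{}_b (free index c): η^{cc'} η^{bb'} H_{c'b'b}. -/
def tr2 (H : T3) (c : Idx) : ℝ := ∑ b, ∑ c', ∑ b', ηm c c' * ηm b b' * H c' b' b

/-- The quadratic functional
`q(H) = H^{abc}(H_{cba} − 2K_{cba}) + H^a{}_{ca}(H^{cb}{}_b − 2K^{cb}{}_b)
        + λ H^{[abc]}(H_{[abc]} − 2K_{[abc]})`. -/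
def qfun (lam : ℝ) (K H : T3) : ℝ :=
  (∑ a, ∑ b, ∑ c, up3 H a b c * (H c b a - 2 * K c b a))
  + (∑ c, tr1 H c * (tr2 H c - 2 * tr2 K c))
  + lam * ∑ a, ∑ b, ∑ c,
      up3 (fun x y z => asym H x y z) a b c * (asym H a b c - 2 * asym K a b c)

/-- `W`: the space of rank-3 tensors antisymmetric in their first two indices. -/
def Wsub : Submodule ℝ T3 where
  carrier := {H | ∀ a b c, H a b c = -H b a c}
  add_mem' := by
    intro x y hx hy a b c
    simp only [Pi.add_apply]
    rw [hx a b c, hy a b c]; ring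
  zero_mem' := by intro a b c; simp
  smul_mem' := by
    intro r x hx a b c
    simp only [Pi.smul_apply, smul_eq_mul]
    rw [hx a b c]; ring

/-- `W₀`: the semi-teleparallel constraint subspace of `W`, consisting of tensors
antisymmetric in their first two indices whose purely spatial components vanish
(`H_{ijk} = 0` for `i,j,k ∈ {1,2,3}`). -/
def W0 : Submodule ℝ T3 where
  carrier := {H | (∀ a b c, H a b c = -H b a c) ∧
    ∀ i j k : Fin 3, H i.succ j.succ k.succ = 0}
  add_mem' := by
    intro x y hx hy
    constructor
    · intro a b c
      simp only [Pi.add_apply]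
      rw [hx.1 a b c, hy.1 a b c]; ring
    · intro i j k
      simp only [Pi.add_apply]
      rw [hx.2 i j k, hy.2 i j k]; ring
  zero_mem' := by
    constructor
    · intro a b c; simp
    · intro i j k; simp
  smul_mem' := by
    intro r x hx
    constructor
    · intro a b c
      simp only [Pi.smul_apply, smul_eq_mul]
      rw [hx.1 a b c]; ring
    · intro i j k
      simp only [Pi.smul_apply, smul_eq_mul]
      rw [hx.2 i j k]; ring

/-!
On `W` the functional is `q(H) = B(H - K, H - K) - B(K, K)` for the symmetric bilinear form `B`
obtained by polarizing its quadratic part, so `H ∈ W₀` is critical iff `D := H - K` is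
`B`-orthogonal to `W₀`. Pairing `D` with the elementary tensors `e₀ᵢ₀, e₀ᵢᵢ, e₀ᵢⱼ, eᵢⱼ₀` of `W₀`
shows that this happens iff `Σⱼ Dᵢⱼⱼ = 0` and `D₀ᵢⱼ = Dᵢⱼ₀ = 0`. The parameter `λ` only enters
through a `3 × 3` system for each pair `i ≠ j`, which is singular only for `λ = 1`. For `H ∈ W₀`
one has `Dᵢⱼⱼ = -Kᵢⱼⱼ`, and erasing the spatial components of `K` gives a critical point.
-/

lemma sum_ηm_mul (a : Idx) (f : Idx → ℝ) : ∑ x, ηm a x * f x = ηm a a * f a := by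
  simp [ηm]

lemma ηm_mul_self (a : Idx) : ηm a a * ηm a a = 1 := by
  simp only [ηm]; split_ifs <;> norm_num

lemma up3_apply (H : T3) (a b c : Idx) : up3 H a b c = ηm a a * ηm b b * ηm c c * H a b c := by
  simp only [up3, mul_assoc, ← Finset.mul_sum, sum_ηm_mul]

lemma tr1_apply (H : T3) (c : Idx) : tr1 H c = ∑ a, ηm a a * H a c a := by
  simp only [tr1, sum_ηm_mul]

lemma tr2_apply (H : T3) (c : Idx) : tr2 H c = ηm c c * ∑ b, ηm b b * H c b b := by
  simp only [tr2, mul_assoc, ← Finset.mul_sum, sum_ηm_mul]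

lemma tr1_eq_neg_of_mem_Wsub {H : T3} (hH : H ∈ Wsub) (c : Idx) :
    tr1 H c = -(ηm c c * tr2 H c) := by
  rw [tr1_apply, tr2_apply, ← mul_assoc, ηm_mul_self, one_mul, ← Finset.sum_neg_distrib]
  exact Finset.sum_congr rfl fun a _ => by rw [hH a c a]; ring

lemma asym_add (F G : T3) (a b c : Idx) : asym (F + G) a b c = asym F a b c + asym G a b c := by
  simp only [asym, Pi.add_apply]; ring

lemma asym_smul (r : ℝ) (F : T3) (a b c : Idx) : asym (r • F) a b c = r * asym F a b c := by
  simp only [asym, Pi.smul_apply, smul_eq_mul]; ring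

lemma tr1_add (F G : T3) (c : Idx) : tr1 (F + G) c = tr1 F c + tr1 G c := by
  simp only [tr1_apply, Pi.add_apply, mul_add, Finset.sum_add_distrib]

lemma tr1_smul (r : ℝ) (F : T3) (c : Idx) : tr1 (r • F) c = r * tr1 F c := by
  simp only [tr1_apply, Pi.smul_apply, smul_eq_mul, Finset.mul_sum, mul_left_comm]

lemma tr2_add (F G : T3) (c : Idx) : tr2 (F + G) c = tr2 F c + tr2 G c := by
  simp only [tr2_apply, Pi.add_apply, mul_add, Finset.sum_add_distrib]

lemma tr2_smul (r : ℝ) (F : T3) (c : Idx) : tr2 (r • F) c = r * tr2 F c := by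
  simp only [tr2_apply, Pi.smul_apply, smul_eq_mul, Finset.mul_sum, mul_left_comm]

lemma W0_le_Wsub : W0 ≤ Wsub := fun _ hH => hH.1

lemma apply_self_eq_zero_of_mem_Wsub {X : T3} (hX : X ∈ Wsub) (a c : Idx) : X a a c = 0 := by
  linarith [hX a a c]

lemma apply_eq_zero_of_mem_W0 {X : T3} (hX : X ∈ W0) {a b c : Idx} (ha : a ≠ 0) (hb : b ≠ 0)
    (hc : c ≠ 0) : X a b c = 0 := by
  obtain ⟨i, rfl⟩ := Fin.exists_succ_eq.mpr ha
  obtain ⟨j, rfl⟩ := Fin.exists_succ_eq.mpr hb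
  obtain ⟨k, rfl⟩ := Fin.exists_succ_eq.mpr hc
  exact hX.2 i j k

lemma asym_of_mem_Wsub {X : T3} (hX : X ∈ Wsub) (a b c : Idx) :
    asym X a b c = (X a b c + X b c a + X c a b) / 3 := by
  simp only [asym, hX a c b, hX b a c, hX c b a]; ring

def bform (lam : ℝ) (F G : T3) : ℝ :=
  (∑ a, ∑ b, ∑ c, up3 F a b c * G c b a)
  + (∑ c, tr1 F c * tr2 G c)
  + lam * ∑ a, ∑ b, ∑ c, up3 (fun x y z => asym F x y z) a b c * asym G a b c

lemma isBilinearMap_bform (lam : ℝ) : IsBilinearMap ℝ (bform lam) where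
  add_left F F' G := by
    simp only [bform, up3_apply, asym_add, tr1_add, Pi.add_apply, Fin.sum_univ_four]; ring
  smul_left r F G := by
    simp only [bform, up3_apply, asym_smul, tr1_smul, Pi.smul_apply, smul_eq_mul,
      Fin.sum_univ_four]; ring
  add_right F G G' := by
    simp only [bform, asym_add, tr2_add, Pi.add_apply, Fin.sum_univ_four]; ring
  smul_right r F G := by
    simp only [bform, asym_smul, tr2_smul, Pi.smul_apply, smul_eq_mul, Fin.sum_univ_four]; ring

lemma bform_comm (lam : ℝ) {F G : T3} (hF : F ∈ Wsub) (hG : G ∈ Wsub) :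
    bform lam F G = bform lam G F := by
  simp only [bform, up3_apply, tr1_eq_neg_of_mem_Wsub hF, tr1_eq_neg_of_mem_Wsub hG,
    Fin.sum_univ_four]
  ring

lemma qfun_eq_bform (lam : ℝ) (K H : T3) :
    qfun lam K H = bform lam H H - 2 * bform lam H K := by
  simp only [qfun, bform, Fin.sum_univ_four]
  ring

lemma qfun_eq_bform_sub {lam : ℝ} {K H : T3} (hK : K ∈ Wsub) (hH : H ∈ Wsub) :
    qfun lam K H = bform lam (H - K) (H - K) - bform lam K K := by
  have hB := isBilinearMap_bform lam
  rw [qfun_eq_bform]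
  simp only [sub_eq_add_neg, ← neg_one_smul ℝ K, hB.add_left, hB.add_right, hB.smul_left,
    hB.smul_right, smul_eq_mul, bform_comm lam hH hK]
  ring

lemma bform_of_mem_W0 (lam : ℝ) {V D : T3} (hV : V ∈ W0) (hD : D ∈ Wsub) :
    bform lam V D =
      -∑ i : Fin 3, V 0 i.succ 0 * ∑ j : Fin 3, D i.succ j.succ j.succ
      - ∑ i : Fin 3, ∑ j : Fin 3, V 0 i.succ j.succ * (D j.succ i.succ 0 + D 0 j.succ i.succ)
      - ∑ i : Fin 3, ∑ j : Fin 3, V i.succ j.succ 0 * D 0 j.succ i.succ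
      + (∑ i : Fin 3, V 0 i.succ i.succ) * ∑ j : Fin 3, D 0 j.succ j.succ
      - 3 * lam * ∑ i : Fin 3, ∑ j : Fin 3, asym V 0 i.succ j.succ * asym D 0 i.succ j.succ := by
  have hVW := W0_le_Wsub hV
  simp only [bform, up3_apply, tr1_eq_neg_of_mem_Wsub hVW, tr2_apply, asym_of_mem_Wsub hVW,
    asym_of_mem_Wsub hD, Fin.sum_univ_four, Fin.sum_univ_three]
  simp [apply_self_eq_zero_of_mem_Wsub hVW, apply_self_eq_zero_of_mem_Wsub hD,
    apply_eq_zero_of_mem_W0 hV, hVW 1 0, hVW 2 0, hVW 3 0, hVW 2 1, hVW 3 1, hVW 3 2,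
    hD 1 0, hD 2 0, hD 3 0, hD 2 1, hD 3 1, hD 3 2, ηm]
  ring

lemma fderiv_qfun_W0_apply (lam : ℝ) {K : T3} (hK : K ∈ Wsub) (H V : W0) :
    fderiv ℝ (fun H : W0 => qfun lam K (H : T3)) H V = 2 * bform lam V (H - K) := by
  set B := (isBilinearMap_bform lam).toContinuousBilinearMap
  have hq : (fun H : W0 => qfun lam K (H : T3)) =
      fun H : W0 => B ((H : T3) - K) ((H : T3) - K) - bform lam K K := by
    funext H
    exact qfun_eq_bform_sub hK (W0_le_Wsub H.2)
  have hsub : HasFDerivAt (fun H : W0 => (H : T3) - K) W0.subtypeL H :=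
    W0.subtypeL.hasFDerivAt.sub_const K
  rw [hq, ((B.hasFDerivAt_of_bilinear hsub hsub).sub_const _).fderiv]
  simp only [add_apply, ContinuousLinearMap.precompR_apply, ContinuousLinearMap.precompL_apply,
    ContinuousLinearMap.compL_apply, ContinuousLinearMap.comp_apply, Submodule.subtypeL_apply,
    IsBilinearMap.toContinuousBilinearMap_apply, B]
  rw [bform_comm lam (Wsub.sub_mem (W0_le_Wsub H.2) hK) (W0_le_Wsub V.2)]
  ring

lemma fderiv_qfun_W0_eq_zero_iff_orthogonal (lam : ℝ) {K : T3} (hK : K ∈ Wsub) (H : W0) :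
    fderiv ℝ (fun H : W0 => qfun lam K (H : T3)) H = 0 ↔
      ∀ V ∈ W0, bform lam V (H - K) = 0 := by
  constructor
  · intro h V hV
    have := fderiv_qfun_W0_apply lam hK H ⟨V, hV⟩
    rw [h, zero_apply] at this
    linarith
  · intro h
    ext V
    rw [fderiv_qfun_W0_apply lam hK, h V V.2, mul_zero, zero_apply]

def wedge (p q r : Idx) : T3 := fun a b c =>
  ((if a = p then 1 else 0) * (if b = q then 1 else 0)
    - (if a = q then 1 else 0) * (if b = p then 1 else 0)) * (if c = r then 1 else 0)

lemma wedge_mem_W0 {p q r : Idx} (h : p = 0 ∨ q = 0 ∨ r = 0) : wedge p q r ∈ W0 := by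
  refine ⟨fun a b c => ?_, fun i j k => ?_⟩
  · simp only [wedge]; ring
  · rcases h with rfl | rfl | rfl <;> simp [wedge, Fin.succ_ne_zero]

section Orthogonality

variable {lam : ℝ} {D : T3}

lemma bform_wedge_zero_succ_zero (hD : D ∈ Wsub) (i : Fin 3) :
    bform lam (wedge 0 i.succ 0) D = -∑ j : Fin 3, D i.succ j.succ j.succ := by
  rw [bform_of_mem_W0 _ (wedge_mem_W0 (Or.inl rfl)) hD]
  fin_cases i <;> simp [wedge, asym, Fin.sum_univ_three, apply_self_eq_zero_of_mem_Wsub hD]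

lemma bform_wedge_zero_succ_succ_self (hD : D ∈ Wsub) (i : Fin 3) :
    bform lam (wedge 0 i.succ i.succ) D = ∑ j : Fin 3, D 0 j.succ j.succ - D 0 i.succ i.succ := by
  rw [bform_of_mem_W0 _ (wedge_mem_W0 (Or.inl rfl)) hD]
  fin_cases i <;> simp [wedge, asym, Fin.sum_univ_three, apply_self_eq_zero_of_mem_Wsub hD] <;>
    ring

lemma bform_wedge_zero_succ_succ {i j : Fin 3} (hD : D ∈ Wsub) (hij : i ≠ j) :
    bform lam (wedge 0 i.succ j.succ) D =
      -(D j.succ i.succ 0 + D 0 j.succ i.succ) - 2 * lam * asym D 0 i.succ j.succ := by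
  rw [bform_of_mem_W0 _ (wedge_mem_W0 (Or.inl rfl)) hD]
  fin_cases i <;> fin_cases j <;>
    simp_all [wedge, asym, Fin.sum_univ_three, apply_self_eq_zero_of_mem_Wsub hD] <;> ring

lemma bform_wedge_succ_succ_zero {i j : Fin 3} (hD : D ∈ Wsub) (hij : i ≠ j) :
    bform lam (wedge i.succ j.succ 0) D =
      D 0 i.succ j.succ - D 0 j.succ i.succ - 2 * lam * asym D 0 i.succ j.succ := by
  rw [bform_of_mem_W0 _ (wedge_mem_W0 (Or.inr (Or.inr rfl))) hD]
  fin_cases i <;> fin_cases j <;>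
    simp_all [wedge, asym, Fin.sum_univ_three, apply_self_eq_zero_of_mem_Wsub hD] <;> ring

lemma sum_succ_succ_succ_eq_zero_of_orthogonal (hD : D ∈ Wsub)
    (horth : ∀ V ∈ W0, bform lam V D = 0) (i : Fin 3) :
    ∑ j : Fin 3, D i.succ j.succ j.succ = 0 := by
  simpa [bform_wedge_zero_succ_zero hD] using
    horth _ (wedge_mem_W0 (Or.inl rfl) : wedge 0 i.succ 0 ∈ W0)

lemma apply_zero_succ_succ_self_eq_zero_of_orthogonal (hD : D ∈ Wsub)
    (horth : ∀ V ∈ W0, bform lam V D = 0) (i : Fin 3) : D 0 i.succ i.succ = 0 := by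
  have h : ∀ i : Fin 3, ∑ j : Fin 3, D 0 j.succ j.succ - D 0 i.succ i.succ = 0 := fun i => by
    rw [← bform_wedge_zero_succ_succ_self hD i]
    exact horth _ (wedge_mem_W0 (Or.inl rfl))
  have htrace : ∑ j : Fin 3, D 0 j.succ j.succ = 0 := by
    have := Finset.sum_eq_zero (s := univ) fun i _ => h i
    rw [Finset.sum_sub_distrib, Finset.sum_const, card_univ, Fintype.card_fin, nsmul_eq_mul,
      Nat.cast_ofNat] at this
    linarith
  linarith [h i]

lemma apply_zero_succ_succ_eq_zero_of_orthogonal (hlam : lam ≠ 1) (hD : D ∈ Wsub)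
    (horth : ∀ V ∈ W0, bform lam V D = 0) {i j : Fin 3} (hij : i ≠ j) :
    D 0 i.succ j.succ = 0 ∧ D i.succ j.succ 0 = 0 := by
  have e₁ := horth _ (wedge_mem_W0 (Or.inl rfl) : wedge 0 i.succ j.succ ∈ W0)
  have e₂ := horth _ (wedge_mem_W0 (Or.inl rfl) : wedge 0 j.succ i.succ ∈ W0)
  have e₃ := horth _ (wedge_mem_W0 (Or.inr (Or.inr rfl)) : wedge i.succ j.succ 0 ∈ W0)
  rw [bform_wedge_zero_succ_succ hD hij] at e₁
  rw [bform_wedge_zero_succ_succ hD hij.symm] at e₂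
  rw [bform_wedge_succ_succ_zero hD hij] at e₃
  simp only [asym_of_mem_Wsub hD, hD j.succ i.succ 0, hD j.succ 0 i.succ, hD i.succ 0 j.succ]
    at e₁ e₂ e₃
  -- `e₁ + e₂` and `e₃ - e₁` do not involve `λ`
  have hb : D 0 j.succ i.succ = -D 0 i.succ j.succ := by linarith
  have hc : D i.succ j.succ 0 = D 0 i.succ j.succ := by linarith
  rw [hb, hc] at e₃
  have ha : (1 - lam) * D 0 i.succ j.succ = 0 := by linear_combination e₃ / 2
  have ha' := (mul_eq_zero.mp ha).resolve_left (sub_ne_zero.mpr hlam.symm)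
  exact ⟨ha', hc.trans ha'⟩

lemma orthogonal_W0_iff (hlam : lam ≠ 1) (hD : D ∈ Wsub) :
    (∀ V ∈ W0, bform lam V D = 0) ↔
      (∀ i : Fin 3, ∑ j : Fin 3, D i.succ j.succ j.succ = 0) ∧
        ∀ i j : Fin 3, D 0 i.succ j.succ = 0 ∧ D i.succ j.succ 0 = 0 := by
  constructor
  · intro horth
    refine ⟨sum_succ_succ_succ_eq_zero_of_orthogonal hD horth, fun i j => ?_⟩
    rcases eq_or_ne i j with rfl | hij
    · exact ⟨apply_zero_succ_succ_self_eq_zero_of_orthogonal hD horth i,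
        apply_self_eq_zero_of_mem_Wsub hD _ _⟩
    · exact apply_zero_succ_succ_eq_zero_of_orthogonal hlam hD horth hij
  · rintro ⟨htrace, hzero⟩ V hV
    have hzero' : ∀ i j : Fin 3, D j.succ 0 i.succ = 0 := fun i j => by
      rw [hD, (hzero j i).1, neg_zero]
    simp [bform_of_mem_W0 lam hV hD, asym_of_mem_Wsub hD, htrace, hzero, hzero']

end Orthogonality

lemma fderiv_qfun_W0_eq_zero_iff {lam : ℝ} (hlam : lam ≠ 1) {K : T3} (hK : K ∈ Wsub) (H : W0) :
    fderiv ℝ (fun H : W0 => qfun lam K (H : T3)) H = 0 ↔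
      (∀ i : Fin 3, ∑ j : Fin 3, K i.succ j.succ j.succ = 0) ∧
        ∀ i j : Fin 3, (H : T3) 0 i.succ j.succ = K 0 i.succ j.succ ∧
          (H : T3) i.succ j.succ 0 = K i.succ j.succ 0 := by
  rw [fderiv_qfun_W0_eq_zero_iff_orthogonal lam hK,
    orthogonal_W0_iff hlam (Wsub.sub_mem (W0_le_Wsub H.2) hK)]
  simp [sub_eq_zero, H.2.2]

def dropSpatial (K : T3) : T3 := fun a b c => if a ≠ 0 ∧ b ≠ 0 ∧ c ≠ 0 then 0 else K a b c

lemma dropSpatial_mem_W0 {K : T3} (hK : K ∈ Wsub) : dropSpatial K ∈ W0 := by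
  refine ⟨fun a b c => ?_, fun i j k => by simp [dropSpatial, Fin.succ_ne_zero]⟩
  by_cases h : a ≠ 0 ∧ b ≠ 0 ∧ c ≠ 0
  · simp [dropSpatial, h]
  · rw [dropSpatial, dropSpatial, if_neg h, if_neg fun h' => h ⟨h'.2.1, h'.1, h'.2.2⟩]
    exact hK a b c

/-- For λ ≠ 1, the restriction of `q` to the semi-teleparallel constraint
subspace `W₀` has a critical point iff `Σⱼ K_{ijj} = 0` for each spatial `i`; in that case
`H ∈ W₀` is a critical point iff `H_{0ij} = K_{0ij}` and `H_{ij0} = K_{ij0}` for all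
spatial `i,j` (the components `H_{0i0}` being arbitrary). -/
theorem statement16 (lam : ℝ) (hlam : lam ≠ 1)
    (K : T3) (hK : ∀ a b c, K a b c = -K b a c) :
    ((∃ H : W0, fderiv ℝ (fun H : W0 => qfun lam K (H : T3)) H = 0) ↔
      ∀ i : Fin 3, (∑ j : Fin 3, K i.succ j.succ j.succ) = 0) ∧
    ((∀ i : Fin 3, (∑ j : Fin 3, K i.succ j.succ j.succ) = 0) →
      ∀ H : W0, (fderiv ℝ (fun H : W0 => qfun lam K (H : T3)) H = 0 ↔
        ∀ i j : Fin 3, (H : T3) 0 i.succ j.succ = K 0 i.succ j.succ ∧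
          (H : T3) i.succ j.succ 0 = K i.succ j.succ 0)) := by
  have hcrit := fderiv_qfun_W0_eq_zero_iff hlam (K := K) hK
  refine ⟨⟨fun ⟨H, hH⟩ => ((hcrit H).1 hH).1, fun htrace => ?_⟩, fun htrace H => ?_⟩
  · refine ⟨⟨dropSpatial K, dropSpatial_mem_W0 hK⟩, (hcrit _).2 ⟨htrace, fun i j => ?_⟩⟩
    simp [dropSpatial, Fin.succ_ne_zero]
  · rw [hcrit H]
    exact and_iff_right htrace
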